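/- Let G be a finite group, μ a conjugation-invariant probability measure on G, and suppose there exist t₀ ∈ ℕ and δ > 0 such that μ^{*t₀}(g) ≥ δ/|G| for all g ∈ G. Then for every non-trivial irreducible character ρ of G, the Fourier coefficient a_ρ = ∑_{g∈G} conj(ρ(g)) μ(g) satisfies |a_ρ|^{t₀} ≤ ρ(1)^{t₀} (1 − δ), in particular |a_ρ| < ρ(1). -/

import Mathlib

set_option linter.unusedSectionVars false

open CategoryTheory

variable {G : Type} [Group G] [Fintype G] [DecidableEq G]

/-- The `t`-fold convolution power of a measure `μ` on a finite group `G`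
(with `μ^{*0}` the Dirac measure at the identity). -/
noncomputable def convPow (μ : G → ℝ) : ℕ → G → ℝ
  | 0 => fun g => if g = 1 then 1 else 0
  | (t + 1) => fun g => ∑ x : G, convPow μ t x * μ (x⁻¹ * g)

open Polynomial in
lemma aux_matrix_root_norm {m : ℕ} {n : ℕ} (hn : n ≠ 0) (M : Matrix (Fin m) (Fin m) ℂ)
    (hM : M ^ n = 1) {lam : ℂ} (hlam : lam ∈ M.charpoly.roots) : ‖lam‖ = 1 := by
  have hne : M.charpoly ≠ 0 := M.charpoly_monic.ne_zero
  have hroot : M.charpoly.IsRoot lam := (Polynomial.mem_roots hne).mp hlam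
  have hdet : (Matrix.scalar (Fin m) lam - M).det = 0 := by
    have := eval_det (Matrix.charmatrix M) lam
    rw [Matrix.matPolyEquiv_charmatrix] at this
    have h2 : Polynomial.eval lam M.charpoly = 0 := hroot
    rw [Matrix.charpoly, this] at h2
    simpa using h2
  obtain ⟨v, hv0, hv⟩ := (Matrix.exists_mulVec_eq_zero_iff).mpr hdet
  have hMv : M.mulVec v = lam • v := by
    have : Matrix.scalar (Fin m) lam = lam • (1 : Matrix (Fin m) (Fin m) ℂ) := by
      ext i j
      by_cases h : i = j <;> simp [h, Matrix.scalar_apply, Matrix.one_apply]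
    rw [this, Matrix.sub_mulVec, Matrix.smul_mulVec, Matrix.one_mulVec] at hv
    rw [eq_comm, ← sub_eq_zero]
    simpa [sub_eq_zero] using hv
  have hpow : ∀ k : ℕ, (M ^ k).mulVec v = lam ^ k • v := by
    intro k
    induction k with
    | zero => simp [Matrix.one_mulVec]
    | succ k ih =>
      rw [pow_succ, ← Matrix.mulVec_mulVec, hMv, Matrix.mulVec_smul, ih, pow_succ]
      rw [smul_smul, mul_comm]
  have h1 : lam ^ n = 1 := by
    have := hpow n
    rw [hM, Matrix.one_mulVec] at this
    have h2 : (lam ^ n - 1) • v = 0 := by rw [sub_smul, one_smul, ← this, sub_self]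
    rcases smul_eq_zero.mp h2 with h | h
    · exact sub_eq_zero.mp h
    · exact absurd h hv0
  have : ‖lam‖ ^ n = 1 := by rw [← norm_pow, h1, norm_one]
  rcases (pow_eq_one_iff_cases.mp this) with h | h | h
  · exact absurd h hn
  · exact h
  · exfalso; nlinarith [norm_nonneg lam, h.1]

open Polynomial in
lemma aux_matrix_trace_bound {m : ℕ} {n : ℕ} (hn : n ≠ 0) (M : Matrix (Fin m) (Fin m) ℂ)
    (hM : M ^ n = 1) : ‖M.trace‖ ≤ (m : ℝ) := by
  rw [Matrix.trace_eq_sum_roots_charpoly]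
  refine le_trans (norm_multiset_sum_le _) ?_
  have hcard : M.charpoly.roots.card = m := by
    rw [(Polynomial.splits_iff_card_roots).mp (IsAlgClosed.splits _),
      Matrix.charpoly_natDegree_eq_dim, Fintype.card_fin]
  have : (M.charpoly.roots.map norm) = Multiset.replicate m 1 := by
    rw [Multiset.eq_replicate]
    constructor
    · rw [Multiset.card_map, hcard]
    · intro x hx
      obtain ⟨lam, hlam, rfl⟩ := Multiset.mem_map.mp hx
      exact aux_matrix_root_norm hn M hM hlam
  rw [this, Multiset.sum_replicate]
  simp

lemma aux_char_norm_le (V : FDRep ℂ G) (g : G) :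
    ‖V.character g‖ ≤ (Module.finrank ℂ V : ℝ) := by
  set b := Module.finBasis ℂ V
  have htr : V.character g = (LinearMap.toMatrix b b (V.ρ g)).trace :=
    LinearMap.trace_eq_matrix_trace ℂ b (V.ρ g)
  have hpow : (LinearMap.toMatrix b b (V.ρ g)) ^ (orderOf g) = 1 := by
    have : (V.ρ g) ^ (orderOf g) = 1 := by
      rw [← map_pow, pow_orderOf_eq_one, map_one]
    rw [LinearMap.toMatrix_pow, this, LinearMap.toMatrix_one]
  rw [htr]
  exact aux_matrix_trace_bound (orderOf_pos g).ne' _ hpow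

/-- The operator `∑ g, ν g • ρ g` associated to a real function on the group. -/
noncomputable def opOf (V : FDRep ℂ G) (ν : G → ℝ) : V →ₗ[ℂ] V :=
  ∑ g : G, (ν g : ℂ) • (V.ρ g : V →ₗ[ℂ] V)

lemma opOf_conv (V : FDRep ℂ G) (μ : G → ℝ) (t : ℕ) :
    opOf V (convPow μ (t+1)) = opOf V (convPow μ t) * opOf V μ := by
  unfold opOf
  rw [Finset.sum_mul_sum]
  have : ∀ x : G, ∑ h : G, ((convPow μ t x : ℂ) • V.ρ x) * ((μ h : ℂ) • V.ρ h)
      = ∑ g : G, ((convPow μ t x : ℂ) * (μ (x⁻¹ * g) : ℂ)) • V.ρ g := by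
    intro x
    refine Fintype.sum_bijective (fun h => x * h) (Group.mulLeft_bijective x) _ _ fun h => ?_
    rw [smul_mul_smul_comm, ← map_mul, inv_mul_cancel_left]
  simp_rw [this]
  rw [Finset.sum_comm]
  refine Finset.sum_congr rfl fun g _ => ?_
  rw [← Finset.sum_smul]
  congr 1
  show ((∑ x : G, convPow μ t x * μ (x⁻¹ * g) : ℝ) : ℂ) = _
  push_cast
  rfl

omit [DecidableEq G] in
lemma opOf_equivariant (V : FDRep ℂ G) (μ : G → ℝ)
    (hconj : ∀ g h : G, μ (h * g * h⁻¹) = μ g) (h : G) :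
    (V.ρ h : V →ₗ[ℂ] V) * opOf V μ = opOf V μ * V.ρ h := by
  unfold opOf
  rw [Finset.mul_sum, Finset.sum_mul]
  refine Fintype.sum_bijective (fun g => h * g * h⁻¹) ?_ _ _ fun g => ?_
  · exact (Equiv.mulLeft h |>.trans (Equiv.mulRight h⁻¹)).bijective
  · rw [hconj g h, mul_smul_comm, smul_mul_assoc, ← map_mul, ← map_mul,
      inv_mul_cancel_right]

omit [DecidableEq G] in
lemma opOf_smul_id (V : FDRep ℂ G) [Simple V] (μ : G → ℝ)
    (hconj : ∀ g h : G, μ (h * g * h⁻¹) = μ g) :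
    ∃ c : ℂ, opOf V μ = c • (1 : V →ₗ[ℂ] V) := by
  let F : V ⟶ V := ⟨InducedCategory.homMk (ModuleCat.ofHom (opOf V μ)), fun h => by
    ext v
    exact congrArg (fun f : V →ₗ[ℂ] V => f v) (opOf_equivariant V μ hconj h).symm⟩
  obtain ⟨c, hc⟩ := CategoryTheory.endomorphism_simple_eq_smul_id ℂ F
  refine ⟨c, ?_⟩
  have := congrArg Action.Hom.hom hc
  ext v
  have := congrArg (fun f => f.hom.hom v) this
  exact this.symm

omit [DecidableEq G] in
lemma trace_opOf (V : FDRep ℂ G) (ν : G → ℝ) :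
    LinearMap.trace ℂ V (opOf V ν) = ∑ g : G, (ν g : ℂ) * V.character g := by
  unfold opOf
  rw [map_sum]
  refine Finset.sum_congr rfl fun g _ => ?_
  rw [map_smul, smul_eq_mul]
  rfl

lemma convPow_sum_eq_one (μ : G → ℝ) (hsum : ∑ g : G, μ g = 1) (t : ℕ) :
    ∑ g : G, convPow μ t g = 1 := by
  induction t with
  | zero => simp [convPow]
  | succ t ih =>
    show ∑ g : G, ∑ x : G, convPow μ t x * μ (x⁻¹ * g) = 1
    rw [Finset.sum_comm]
    have : ∀ x : G, ∑ g : G, convPow μ t x * μ (x⁻¹ * g) = convPow μ t x := by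
      intro x
      rw [← Finset.mul_sum]
      have : ∑ g : G, μ (x⁻¹ * g) = 1 := by
        rw [← hsum]
        exact Fintype.sum_bijective (fun g => x⁻¹ * g) (Group.mulLeft_bijective x⁻¹) _ _
          (fun g => rfl)
      rw [this, mul_one]
    simp_rw [this]
    exact ih

lemma convPow_one_eq (μ : G → ℝ) : convPow μ 1 = μ := by
  funext g
  show ∑ x : G, (if x = 1 then (1:ℝ) else 0) * μ (x⁻¹ * g) = μ g
  rw [Finset.sum_eq_single 1]
  · simp
  · intro x _ hx; simp [hx]
  · simp

/-- If `μ` is a conjugation-invariant probability measure on a finite group `G` with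
`μ^{*t₀}(g) ≥ δ/|G|` for all `g` (where `δ > 0`), then for every nontrivial irreducible
character `ρ` the Fourier coefficient `a_ρ = ∑_g conj(ρ(g)) μ(g)` satisfies
`|a_ρ|^{t₀} ≤ ρ(1)^{t₀} (1 − δ)`, and in particular `|a_ρ| < ρ(1)`. -/
theorem fourier_coefficient_strict_bound
    (μ : G → ℝ) (hnonneg : ∀ g, 0 ≤ μ g) (hsum : ∑ g : G, μ g = 1)
    (hconj : ∀ g h : G, μ (h * g * h⁻¹) = μ g)
    (t₀ : ℕ) (δ : ℝ) (hδ : 0 < δ)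
    (hlb : ∀ g : G, δ / (Fintype.card G : ℝ) ≤ convPow μ t₀ g)
    (V : FDRep ℂ G) [Simple V]
    (hnontriv : ∃ g : G, V.character g ≠ V.character 1) :
    ‖∑ g : G, (starRingEnd ℂ) (V.character g) * (μ g : ℂ)‖ ^ t₀
        ≤ ‖V.character 1‖ ^ t₀ * (1 - δ)
      ∧ ‖∑ g : G, (starRingEnd ℂ) (V.character g) * (μ g : ℂ)‖
        < ‖V.character 1‖ := by
  obtain ⟨g₀, hg₀⟩ := hnontriv
  set N := Fintype.card G with hN
  have hNpos : 0 < N := Fintype.card_pos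
  set d : ℕ := Module.finrank ℂ V with hdd
  have hchar1 : V.character 1 = (d : ℂ) := FDRep.char_one V
  have hdfin : (Module.finrank ℂ V : ℂ) = (d : ℂ) := rfl
  have hN0 : (N : ℝ) ≠ 0 := Nat.cast_ne_zero.mpr hNpos.ne'
  -- d ≠ 0
  have hd0 : d ≠ 0 := by
    intro h
    have : Subsingleton V := Module.finrank_zero_iff.mp (hdd ▸ h)
    exact hg₀ (congrArg (LinearMap.trace ℂ V) (Subsingleton.elim _ _))
  have hdpos : (0:ℝ) < d := by exact_mod_cast Nat.pos_of_ne_zero hd0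
  -- t₀ ≥ 1
  have hg₀1 : g₀ ≠ 1 := fun h => hg₀ (by rw [h])
  have ht₀ : t₀ ≠ 0 := by
    intro h
    have h1 := hlb g₀
    rw [h] at h1
    have : convPow μ 0 g₀ = 0 := by simp [convPow, hg₀1]
    rw [this] at h1
    have : (0:ℝ) < δ / N := div_pos hδ (by exact_mod_cast hNpos)
    linarith
  -- character bound
  have hbound : ∀ g : G, ‖V.character g‖ ≤ (d : ℝ) :=
    fun g => aux_char_norm_le V g
  -- sum of character values is zero
  have hS : ∑ g : G, V.character g = 0 := by
    set u : G → ℝ := fun _ => (N : ℝ)⁻¹ with hu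
    obtain ⟨c₀, hc₀⟩ := opOf_smul_id V u (fun g h => rfl)
    have htr : (N : ℂ)⁻¹ * ∑ g : G, V.character g = c₀ * d := by
      have h0 := trace_opOf V u
      rw [hc₀, map_smul, LinearMap.trace_one, smul_eq_mul] at h0
      calc (N : ℂ)⁻¹ * ∑ g : G, V.character g
          = ∑ g : G, ((u g : ℝ) : ℂ) * V.character g := by
            rw [Finset.mul_sum]
            refine Finset.sum_congr rfl fun g _ => ?_
            congr 1
            simp [hu]
        _ = c₀ * d := by rw [← h0, hdfin]
    have hidem : c₀ = 1 ∨ c₀ = 0 := by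
      -- convPow u 2 = u and convPow u 1 = u
      have h1 : convPow u 1 = u := convPow_one_eq u
      have h2 : convPow u 2 = u := by
        funext g
        show ∑ x : G, convPow u 1 x * u (x⁻¹ * g) = u g
        rw [h1]
        simp only [hu]
        rw [Finset.sum_const, Finset.card_univ, ← hN, nsmul_eq_mul]
        field_simp
      have := opOf_conv V u 1
      rw [h1, h2, hc₀] at this
      have h3 : c₀ • (1 : V →ₗ[ℂ] V) = (c₀ * c₀) • 1 := by
        rw [this, smul_mul_smul_comm, one_mul, mul_comm]
      have h4 := congrArg (LinearMap.trace ℂ V) h3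
      rw [map_smul, map_smul, LinearMap.trace_one, smul_eq_mul, smul_eq_mul] at h4
      have hdC : (d : ℂ) ≠ 0 := by exact_mod_cast hd0
      have h5 : c₀ = c₀ * c₀ := by
        rw [hdfin] at h4
        exact mul_right_cancel₀ hdC h4
      rcases mul_eq_zero.mp (by ring_nf; linear_combination -h5 : c₀ * (c₀ - 1) = 0) with h | h
      · exact Or.inr h
      · exact Or.inl (by linear_combination h)
    rcases hidem with h | h
    · -- c₀ = 1 : then every ρ h = 1, contradiction
      exfalso
      rw [h, one_smul] at hc₀
      have hρ : ∀ x : G, (V.ρ x : V →ₗ[ℂ] V) = 1 := by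
        intro x
        have : (V.ρ x : V →ₗ[ℂ] V) * opOf V u = opOf V u := by
          unfold opOf
          rw [Finset.mul_sum]
          refine Fintype.sum_bijective (fun g => x * g) (Group.mulLeft_bijective x) _ _
            fun g => ?_
          rw [mul_smul_comm, ← map_mul]
        rw [hc₀, mul_one] at this
        rw [this]
      apply hg₀
      show LinearMap.trace ℂ V (V.ρ g₀) = LinearMap.trace ℂ V (V.ρ 1)
      rw [hρ g₀, hρ 1]
    · rw [h, zero_mul] at htr
      have : ((N:ℂ))⁻¹ ≠ 0 := by
        simp only [ne_eq, inv_eq_zero, Nat.cast_eq_zero]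
        exact hNpos.ne'
      exact (mul_eq_zero.mp htr).resolve_left this
  -- the Schur scalar for μ
  obtain ⟨c, hc⟩ := opOf_smul_id V μ hconj
  have hconvop : ∀ t : ℕ, opOf V (convPow μ t) = c ^ t • (1 : V →ₗ[ℂ] V) := by
    intro t
    induction t with
    | zero =>
      rw [pow_zero, one_smul]
      unfold opOf
      rw [Finset.sum_eq_single 1]
      · simp [convPow]
      · intro x _ hx; simp [convPow, hx]
      · simp
    | succ t ih =>
      rw [opOf_conv, ih, hc, smul_mul_smul_comm, one_mul, pow_succ]
  have hsumconv : ∀ t : ℕ, ∑ g : G, (convPow μ t g : ℂ) * V.character g = c ^ t * d := by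
    intro t
    have h0 := trace_opOf V (convPow μ t)
    rw [hconvop t, map_smul, LinearMap.trace_one, smul_eq_mul, hdfin] at h0
    rw [← h0]
  -- a' = c * d
  have ha' : ∑ g : G, (μ g : ℂ) * V.character g = c * d := by
    have := hsumconv 1
    rw [convPow_one_eq, pow_one] at this
    exact this
  -- the target quantity equals conj of a'
  have habs : ‖∑ g : G, (starRingEnd ℂ) (V.character g) * (μ g : ℂ)‖
      = ‖c‖ * d := by
    have : (∑ g : G, (starRingEnd ℂ) (V.character g) * (μ g : ℂ))
        = (starRingEnd ℂ) (∑ g : G, (μ g : ℂ) * V.character g) := by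
      rw [map_sum]
      refine Finset.sum_congr rfl fun g _ => ?_
      rw [map_mul, Complex.conj_ofReal, mul_comm]
    rw [this, map_sum]
    rw [← map_sum, Complex.norm_conj, ha', norm_mul, Complex.norm_natCast]
  -- bound on |c|^t₀
  have hkey : ‖c‖ ^ t₀ ≤ 1 - δ := by
    have hb := hsumconv t₀
    -- |∑ conv * χ| ≤ (1-δ) d
    have hbnd : ‖∑ g : G, (convPow μ t₀ g : ℂ) * V.character g‖ ≤ (1 - δ) * d := by
      have hsplit : (∑ g : G, (convPow μ t₀ g : ℂ) * V.character g)
          = ∑ g : G, ((convPow μ t₀ g - δ / N : ℝ) : ℂ) * V.character g := by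
        rw [← sub_eq_zero, ← Finset.sum_sub_distrib]
        have : ∀ g : G, (convPow μ t₀ g : ℂ) * V.character g
            - ((convPow μ t₀ g - δ / N : ℝ) : ℂ) * V.character g
            = ((δ / N : ℝ) : ℂ) * V.character g := by
          intro g
          push_cast
          ring
        simp_rw [this]
        rw [← Finset.mul_sum, hS, mul_zero]
      rw [hsplit]
      refine le_trans (norm_sum_le _ _) ?_
      have hterm : ∀ g : G, ‖((convPow μ t₀ g - δ / N : ℝ) : ℂ) * V.character g‖
          ≤ (convPow μ t₀ g - δ / N) * d := by
        intro g
        rw [norm_mul]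
        have h1 : ‖((convPow μ t₀ g - δ / N : ℝ) : ℂ)‖
            = convPow μ t₀ g - δ / N := by
          rw [Complex.norm_real, Real.norm_eq_abs, abs_of_nonneg (by linarith [hlb g])]
        rw [h1]
        exact mul_le_mul_of_nonneg_left (hbound g) (by linarith [hlb g])
      refine le_trans (Finset.sum_le_sum fun g _ => hterm g) ?_
      rw [← Finset.sum_mul]
      have : ∑ g : G, (convPow μ t₀ g - δ / N) = 1 - δ := by
        rw [Finset.sum_sub_distrib, convPow_sum_eq_one μ hsum, Finset.sum_const,
          Finset.card_univ, ← hN, nsmul_eq_mul]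
        field_simp
      rw [this]
    rw [hb] at hbnd
    rw [norm_mul, Complex.norm_natCast, norm_pow] at hbnd
    exact le_of_mul_le_mul_right hbnd hdpos
  constructor
  · rw [habs, hchar1, Complex.norm_natCast, mul_pow]
    have h1 : (0:ℝ) ≤ (d:ℝ) ^ t₀ := by positivity
    nlinarith [mul_le_mul_of_nonneg_right hkey h1]
  · rw [habs, hchar1, Complex.norm_natCast]
    have hclt : ‖c‖ < 1 := by
      by_contra hcon
      push_neg at hcon
      have h1 : (1:ℝ) ≤ ‖c‖ ^ t₀ := one_le_pow₀ hcon
      linarith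
    nlinarith [hclt, hdpos]
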